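/- Let σ ∈ Stmt^ω, X ∈ (2^{ρ∪υ})^ω and ζ a computation with ζ ◁ combine(σ, X). Then X = Seq(ζ|σ), i.e. for every t, X_t is exactly the set of predicate terms in ρ and update terms in υ that hold at time t of the reduced computation ζ|σ. -/

import Mathlib

namespace TSLMC

open scoped Classical

/-! ### Theories, function terms, assignments -/

/-- A theory: interpretation of function symbols, plus distinguished values true/false. -/
structure Thy (V F : Type) where
  ε : F → List V → V
  vtrue : V
  vfalse : V

/-- Function terms over inputs `I`, cells `C` and function symbols `F`. -/
inductive FTerm (I C F : Type) : Type where
  | inp  : I → FTerm I C F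
  | cell : C → FTerm I C F
  | app  : F → List (FTerm I C F) → FTerm I C F

/-- An assignment gives values to inputs and cells. -/
abbrev Assign (V I C : Type) := I ⊕ C → V

variable {V I C F Pi : Type}

/-- Evaluation of a function term under an assignment. -/
def FTerm.eval (T : Thy V F) (a : Assign V I C) : FTerm I C F → V
  | .inp i => a (.inl i)
  | .cell c => a (.inr c)
  | .app f ts => T.ε f (ts.attach.map fun t => t.1.eval T a)
decreasing_by
  have := List.sizeOf_lt_of_mem t.2
  simp only [FTerm.app.sizeOf_spec]
  omega

/-- A predicate term is a function term evaluating only to true or false. -/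
def IsPredTerm (T : Thy V F) (τ : FTerm I C F) : Prop :=
  ∀ a : Assign V I C, τ.eval T a = T.vtrue ∨ τ.eval T a = T.vfalse

/-- The theory contains (at least) equality, negation, conjunction and a true constant,
with their usual interpretations, and true ≠ false. -/
structure Ops (V F : Type) (T : Thy V F) where
  feq : F
  fneg : F
  fand : F
  ftrue : F
  heq : ∀ x y : V, T.ε feq [x, y] = if x = y then T.vtrue else T.vfalse
  hneg : ∀ x : V, T.ε fneg [x] = if x = T.vtrue then T.vfalse else T.vtrue
  hand : ∀ x y : V, T.ε fand [x, y] = if x = T.vtrue ∧ y = T.vtrue then T.vtrue else T.vfalse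
  htrue : T.ε ftrue [] = T.vtrue
  tne : T.vtrue ≠ T.vfalse

/-! ### TSL(T) formulas -/

/-- TSL(T) formulas (atoms: predicate terms and update terms `⟦c ↞ τ⟧`). -/
inductive TSL (I C F : Type) : Type where
  | pred : FTerm I C F → TSL I C F
  | upd  : C → FTerm I C F → TSL I C F
  | not  : TSL I C F → TSL I C F
  | and  : TSL I C F → TSL I C F → TSL I C F
  | next : TSL I C F → TSL I C F
  | untl : TSL I C F → TSL I C F → TSL I C F

/-- `prevA init ζ t` is `ζ (t-1)`, with the fixed initial assignment at `t = 0`. -/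
def prevA (init : Assign V I C) (ζ : ℕ → Assign V I C) : ℕ → Assign V I C
  | 0 => init
  | t + 1 => ζ t

/-- Satisfaction of a TSL(T) formula over a computation at a time point. -/
def TSL.sat (T : Thy V F) (init : Assign V I C) (ζ : ℕ → Assign V I C) :
    TSL I C F → ℕ → Prop
  | .pred τ, t => τ.eval T (ζ t) = T.vtrue
  | .upd c τ, t => τ.eval T (prevA init ζ t) = ζ t (.inr c)
  | .not φ, t => ¬ φ.sat T init ζ t
  | .and φ ψ, t => φ.sat T init ζ t ∧ ψ.sat T init ζ t
  | .next φ, t => φ.sat T init ζ (t + 1)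
  | .untl φ ψ, t => ∃ t', t ≤ t' ∧ ψ.sat T init ζ t' ∧
      ∀ t'', t ≤ t'' → t'' < t' → φ.sat T init ζ t''

/-- The list of predicate terms appearing in a TSL(T) formula. -/
def TSL.predList : TSL I C F → List (FTerm I C F)
  | .pred τ => [τ]
  | .upd _ _ => []
  | .not φ => φ.predList
  | .and φ ψ => φ.predList ++ ψ.predList
  | .next φ => φ.predList
  | .untl φ ψ => φ.predList ++ ψ.predList

/-- The list of update terms appearing in a TSL(T) formula. -/
def TSL.updList : TSL I C F → List (C × FTerm I C F)
  | .pred _ => []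
  | .upd c τ => [(c, τ)]
  | .not φ => φ.updList
  | .and φ ψ => φ.updList ++ ψ.updList
  | .next φ => φ.updList
  | .untl φ ψ => φ.updList ++ ψ.updList

/-! ### LTL -/

/-- LTL formulas over atomic propositions `A`. -/
inductive LTL (A : Type) : Type where
  | atom : A → LTL A
  | not : LTL A → LTL A
  | and : LTL A → LTL A → LTL A
  | next : LTL A → LTL A
  | untl : LTL A → LTL A → LTL A

/-- Standard LTL satisfaction over words of sets of atomic propositions. -/
def LTL.sat (w : ℕ → Set A) : LTL A → ℕ → Prop
  | .atom a, t => a ∈ w t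
  | .not φ, t => ¬ φ.sat w t
  | .and φ ψ, t => φ.sat w t ∧ ψ.sat w t
  | .next φ, t => φ.sat w (t + 1)
  | .untl φ ψ, t => ∃ t', t ≤ t' ∧ ψ.sat w t' ∧ ∀ t'', t ≤ t'' → t'' < t' → φ.sat w t''

/-- Atomic propositions: predicate terms and update terms. -/
abbrev AP (I C F : Type) := FTerm I C F ⊕ (C × FTerm I C F)

/-- The LTL formula obtained from a TSL(T) formula by treating predicate and
update terms as atomic propositions. -/
def TSL.toLTL : TSL I C F → LTL (AP I C F)
  | .pred τ => .atom (.inl τ)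
  | .upd c τ => .atom (.inr (c, τ))
  | .not φ => .not φ.toLTL
  | .and φ ψ => .and φ.toLTL ψ.toLTL
  | .next φ => .next φ.toLTL
  | .untl φ ψ => .untl φ.toLTL ψ.toLTL

/-- `SeqW T init ζ ρ υ t` is the set of predicate terms of `ρ` and update terms of `υ`
that hold at time `t` of the computation `ζ`. -/
def SeqW (T : Thy V F) (init : Assign V I C) (ζ : ℕ → Assign V I C)
    (ρ : Set (FTerm I C F)) (υ : Set (C × FTerm I C F)) : ℕ → Set (AP I C F) :=
  fun t => {a | Sum.elim
    (fun τ => τ ∈ ρ ∧ TSL.sat T init ζ (.pred τ) t)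
    (fun u => u ∈ υ ∧ TSL.sat T init ζ (.upd u.1 u.2) t) a}

/-! ### Program statements, matching, feasibility -/

/-- Basic program statements. -/
inductive Stmt0 (I C F : Type) : Type where
  | assert : FTerm I C F → Stmt0 I C F
  | assign : C → FTerm I C F → Stmt0 I C F
  | havoc : C → Stmt0 I C F

/-- Program statements: nonempty finite sequences of basic statements. -/
abbrev Stmt (I C F : Type) := {l : List (Stmt0 I C F) // l ≠ []}

/-- A computation matches a trace of basic statements at time `t`. -/
def matchesAt (T : Thy V F) (init : Assign V I C) (ζ : ℕ → Assign V I C)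
    (σ : ℕ → Stmt0 I C F) (t : ℕ) : Prop :=
  match σ t with
  | .assert τ => τ.eval T (prevA init ζ t) = T.vtrue ∧
      ∀ c : C, ζ t (.inr c) = prevA init ζ t (.inr c)
  | .assign c τ => ζ t (.inr c) = τ.eval T (prevA init ζ t) ∧
      ∀ c', c' ≠ c → ζ t (.inr c') = prevA init ζ t (.inr c')
  | .havoc c => ∀ c', c' ≠ c → ζ t (.inr c') = prevA init ζ t (.inr c')

/-- A computation matches a trace of basic statements. -/
def Matches (T : Thy V F) (init : Assign V I C) (ζ : ℕ → Assign V I C)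
    (σ : ℕ → Stmt0 I C F) : Prop :=
  ∀ t, matchesAt T init ζ σ t

/-- Position (index of the statement, offset inside it) of the `j`-th basic statement
in the flattening of a trace of composed statements. -/
def fpos (σ : ℕ → Stmt I C F) : ℕ → ℕ × ℕ
  | 0 => (0, 0)
  | j + 1 =>
    let p := fpos σ j
    if p.2 + 1 < ((σ p.1).1).length then (p.1, p.2 + 1) else (p.1 + 1, 0)

/-- The flattening of a trace of composed statements into basic statements. -/
def flatten (σ : ℕ → Stmt I C F) (j : ℕ) : Stmt0 I C F :=
  ((σ (fpos σ j).1).1).getD (fpos σ j).2 (((σ (fpos σ j).1).1).head (σ (fpos σ j).1).2)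

/-- A computation matches a trace of composed statements (via its flattening). -/
def MatchesC (T : Thy V F) (init : Assign V I C) (ζ : ℕ → Assign V I C)
    (σ : ℕ → Stmt I C F) : Prop :=
  Matches T init ζ (flatten σ)

/-- A trace of composed statements is feasible if some computation matches it. -/
def Feasible (T : Thy V F) (init : Assign V I C) (σ : ℕ → Stmt I C F) : Prop :=
  ∃ ζ, MatchesC T init ζ σ

/-- A trace of basic statements is feasible if some computation matches it. -/
def Feasible0 (T : Thy V F) (init : Assign V I C) (σ : ℕ → Stmt0 I C F) : Prop :=
  ∃ ζ, Matches T init ζ σ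

/-! ### Büchi automata -/

/-- A Büchi automaton. -/
structure Buchi (A : Type) (Q : Type) where
  q0 : Q
  δ : Q → A → Q → Prop
  Acc : Set Q

/-- A run of a Büchi automaton on a word. -/
def Buchi.IsRun {A Q : Type} (B : Buchi A Q) (σ : ℕ → A) (r : ℕ → Q) : Prop :=
  r 0 = B.q0 ∧ ∀ t, B.δ (r t) (σ t) (r (t + 1))

/-- Büchi acceptance: some run visits accepting states infinitely often. -/
def Buchi.Accepts {A Q : Type} (B : Buchi A Q) (σ : ℕ → A) : Prop :=
  ∃ r, B.IsRun σ r ∧ ∀ n, ∃ m, n ≤ m ∧ r m ∈ B.Acc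

/-- A program automaton over basic statements satisfies a TSL(T) formula if every
computation matching an accepted trace satisfies the formula. -/
def SatisfiesTSL {Qp : Type} (T : Thy V F) (init : Assign V I C)
    (P : Buchi (Stmt0 I C F) Qp) (φ : TSL I C F) : Prop :=
  ∀ σ, P.Accepts σ → ∀ ζ, Matches T init ζ σ → φ.sat T init ζ 0

/-! ### The combine construction and the Büchi program product -/

/-- Extended cell set: original cells, inputs-as-cells, and fresh `tmp` cells. -/
abbrev CStar (I C : Type) := (C ⊕ I) ⊕ ℕ

/-- Embedding of terms over inputs/cells into terms over the extended cell set. -/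
def FTerm.embed : FTerm I C F → FTerm Empty (CStar I C) F
  | .inp i => .cell (.inl (.inr i))
  | .cell c => .cell (.inl (.inl c))
  | .app f ts => .app f (ts.attach.map fun t => t.1.embed)
decreasing_by
  have := List.sizeOf_lt_of_mem t.2
  simp only [FTerm.app.sizeOf_spec]
  omega

/-- Embedding of basic statements into statements over the extended cell set. -/
def Stmt0.embed : Stmt0 I C F → Stmt0 Empty (CStar I C) F
  | .assert τ => .assert τ.embed
  | .assign c τ => .assign (.inl (.inl c)) τ.embed
  | .havoc c => .havoc (.inl (.inl c))

/-- Conjunction of a list of terms (via the theory's conjunction symbol). -/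
def conjTerm (T : Thy V F) (O : Ops V F T) :
    List (FTerm Empty (CStar I C) F) → FTerm Empty (CStar I C) F
  | [] => .app O.ftrue []
  | τ :: ts => .app O.fand [τ, conjTerm T O ts]

/-- The `combine` construction: `save_values; s; new_inputs; check_preds_l; check_updates_l`. -/
noncomputable def combine (T : Thy V F) (O : Ops V F T) (ρ : List (FTerm I C F))
    (υ : List (C × FTerm I C F)) (inps : List I)
    (s : List (Stmt0 I C F)) (l : Set (AP I C F)) : Stmt Empty (CStar I C) F :=
  ⟨(υ.mapIdx fun j u => Stmt0.assign (Sum.inr j) u.2.embed)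
    ++ s.map Stmt0.embed
    ++ (inps.map fun i => Stmt0.havoc (Sum.inl (Sum.inr i)))
    ++ [Stmt0.assert (conjTerm T O
          (ρ.map fun τ => if Sum.inl τ ∈ l then τ.embed else .app O.fneg [τ.embed])),
        Stmt0.assert (conjTerm T O
          (υ.mapIdx fun j u =>
            let eqt : FTerm Empty (CStar I C) F :=
              .app O.feq [.cell (Sum.inl (Sum.inl u.1)), .cell (Sum.inr j)]
            if Sum.inr u ∈ l then eqt else .app O.fneg [eqt]))],
    by simp⟩

/-- Lifting an automaton over basic statements to an automaton over (composed) statements. -/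
def liftB {Qp : Type} (P : Buchi (Stmt0 I C F) Qp) : Buchi (Stmt I C F) Qp where
  q0 := P.q0
  δ := fun q w q' => ∃ s, P.δ q s q' ∧ w = ⟨[s], by simp⟩
  Acc := P.Acc

/-- The combined product `P ⊗ A` of a program automaton and a Büchi automaton over
sets of predicate/update terms. -/
noncomputable def product {Qp Qa : Type} (T : Thy V F) (O : Ops V F T)
    (P : Buchi (Stmt I C F) Qp) (A : Buchi (Set (AP I C F)) Qa)
    (ρ : List (FTerm I C F)) (υ : List (C × FTerm I C F)) (inps : List I) :
    Buchi (Stmt Empty (CStar I C) F) (Qp × Qa) where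
  q0 := (P.q0, A.q0)
  δ := fun x w y => ∃ s l, P.δ x.1 s y.1 ∧ A.δ x.2 l y.2 ∧ w = combine T O ρ υ inps s.1 l
  Acc := {x | x.2 ∈ A.Acc}

/-! ### HyperTSL(T) -/

/-- HyperTSL(T) formulas: a quantifier prefix over trace variables, followed by a
quantifier-free formula over trace-indexed inputs and cells. -/
inductive HyperTSL (I C F Pi : Type) : Type where
  | qf : TSL (I × Pi) (C × Pi) F → HyperTSL I C F Pi
  | all : Pi → HyperTSL I C F Pi → HyperTSL I C F Pi
  | ex : Pi → HyperTSL I C F Pi → HyperTSL I C F Pi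

/-- Extension `ζ̂[π, ζ]` of a hyper-computation by a computation for trace variable `π`. -/
noncomputable def extendH (ζh : ℕ → Assign V (I × Pi) (C × Pi)) (π : Pi)
    (ζ : ℕ → Assign V I C) : ℕ → Assign V (I × Pi) (C × Pi) :=
  fun t x =>
    match x with
    | .inl (i, π') => if π' = π then ζ t (.inl i) else ζh t (.inl (i, π'))
    | .inr (c, π') => if π' = π then ζ t (.inr c) else ζh t (.inr (c, π'))

/-- Satisfaction of a HyperTSL(T) formula. -/
noncomputable def HyperTSL.sat (T : Thy V F) (init : Assign V (I × Pi) (C × Pi))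
    (Z : Set (ℕ → Assign V I C)) :
    HyperTSL I C F Pi → (ℕ → Assign V (I × Pi) (C × Pi)) → ℕ → Prop
  | .qf ψ, ζh, t => ψ.sat T init ζh t
  | .all π φ, ζh, t => ∀ ζ ∈ Z, φ.sat T init Z (extendH ζh π ζ) t
  | .ex π φ, ζh, t => ∃ ζ ∈ Z, φ.sat T init Z (extendH ζh π ζ) t

/-- Lift an assignment to a hyper-assignment (every trace gets the same values). -/
def liftInit (init : Assign V I C) : Assign V (I × Pi) (C × Pi) :=
  fun x => match x with
  | .inl (i, _) => init (.inl i)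
  | .inr (c, _) => init (.inr c)

/-- The set of computations matching accepted traces of a program automaton. -/
def Zof {Qp : Type} (T : Thy V F) (init : Assign V I C)
    (P : Buchi (Stmt0 I C F) Qp) : Set (ℕ → Assign V I C) :=
  {ζ | ∃ σ, P.Accepts σ ∧ Matches T init ζ σ}

/-- A program automaton satisfies a HyperTSL(T) formula. -/
noncomputable def SatisfiesHyper {Qp : Type} (T : Thy V F) (init : Assign V I C)
    (P : Buchi (Stmt0 I C F) Qp) (φ : HyperTSL I C F Pi) : Prop :=
  φ.sat T (liftInit init) (Zof T init P) (fun _ => liftInit init) 0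

/-- Renaming of terms: cell `c` becomes `c_π`, input `i` becomes `i_π`. -/
def FTerm.rename (π : Pi) : FTerm I C F → FTerm (I × Pi) (C × Pi) F
  | .inp i => .inp (i, π)
  | .cell c => .cell (c, π)
  | .app f ts => .app f (ts.attach.map fun t => t.1.rename π)
decreasing_by
  have := List.sizeOf_lt_of_mem t.2
  simp only [FTerm.app.sizeOf_spec]
  omega

/-- Renaming of basic statements to a trace variable. -/
def Stmt0.rename (π : Pi) : Stmt0 I C F → Stmt0 (I × Pi) (C × Pi) F
  | .assert τ => .assert (τ.rename π)
  | .assign c τ => .assign (c, π) (τ.rename π)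
  | .havoc c => .havoc (c, π)

/-- The `n`-fold self-composition of a program automaton. -/
def selfComp {Qp : Type} (P : Buchi (Stmt0 I C F) Qp) (n : ℕ) :
    Buchi (Stmt (I × Fin n) (C × Fin n) F) (Fin n → Qp) where
  q0 := fun _ => P.q0
  δ := fun q w q' => ∃ ss : Fin n → Stmt0 I C F,
        (∀ j, P.δ (q j) (ss j) (q' j)) ∧
        w.1 = (List.finRange n).map fun j => (ss j).rename j
  Acc := Set.univ

/-- The `m`-fold self-composition, using the first `m` of `n` trace variables. -/
def selfCompInto {Qp : Type} (P : Buchi (Stmt0 I C F) Qp) (m n : ℕ) (h : m ≤ n) :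
    Buchi (Stmt (I × Fin n) (C × Fin n) F) (Fin m → Qp) where
  q0 := fun _ => P.q0
  δ := fun q w q' => ∃ ss : Fin m → Stmt0 I C F,
        (∀ j, P.δ (q j) (ss j) (q' j)) ∧
        w.1 = (List.finRange m).map fun j => (ss j).rename (Fin.castLE h j)
  Acc := Set.univ

end TSLMC

/-! ### k-feasibility and the automaton `P_k` -/

namespace TSLMC
open scoped Classical
variable {V I C F Pi : Type}

/-- The statement `assert(true)`. -/
def trueStmt (T : Thy V F) (O : Ops V F T) : Stmt I C F :=
  ⟨[.assert (.app O.ftrue [])], by simp⟩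

/-- Extend a finite window of statements by `assert(true)^ω`. -/
def extendTrue (T : Thy V F) (O : Ops V F T) (ss : List (Stmt I C F)) : ℕ → Stmt I C F :=
  fun t => if h : t < ss.length then ss.get ⟨t, h⟩ else trueStmt T O

/-- A finite window of statements is feasible if, followed by `assert(true)^ω`, it is
feasible for some initial assignment. -/
def WinFeasible (T : Thy V F) (O : Ops V F T) (ss : List (Stmt I C F)) : Prop :=
  ∃ init : Assign V I C, Feasible T init (extendTrue T O ss)

/-- The window `σ_j … σ_{j+k-1}` of a trace. -/
def window (σ : ℕ → α) (j k : ℕ) : List α :=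
  (List.range k).map fun i => σ (j + i)

/-- A trace is `k`-feasible if no window of `k` consecutive statements is infeasible
for all initial assignments. -/
def KFeasible (T : Thy V F) (O : Ops V F T) (k : ℕ) (σ : ℕ → Stmt I C F) : Prop :=
  ∀ j, WinFeasible T O (window σ j k)

/-- Chains of transitions of an automaton. -/
def chain {S Qp : Type} (P : Buchi S Qp) : Qp → List (S × Qp) → Prop
  | _, [] => True
  | q, (s, q') :: rest => P.δ q s q' ∧ chain P q' rest

/-- The last state of an alternating state/statement sequence. -/
def lastQ {S Qp : Type} (st : Qp × List (S × Qp)) : Qp :=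
  (st.2.getLast?).elim st.1 Prod.snd

/-- The statements of an alternating state/statement sequence. -/
def stmts {S Qp : Type} (st : Qp × List (S × Qp)) : List S :=
  st.2.map Prod.fst

/-- Valid states of `P_k`: chains of transitions of `P` of length `k-1`, or shorter
ones starting at the initial state. -/
def ValidSt {S Qp : Type} (P : Buchi S Qp) (k : ℕ) (st : Qp × List (S × Qp)) : Prop :=
  chain P st.1 st.2 ∧ (st.2.length = k - 1 ∨ (st.2.length < k - 1 ∧ st.1 = P.q0))

/-- Extend an alternating sequence by a transition, dropping the first entry if the
window is full. -/
def push {S Qp : Type} (k : ℕ) (st : Qp × List (S × Qp)) (s : S) (q' : Qp) :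
    Qp × List (S × Qp) :=
  let l' := st.2 ++ [(s, q')]
  if k ≤ l'.length then
    match l' with
    | [] => (st.1, [])
    | e :: rest => (e.2, rest)
  else (st.1, l')

/-- The automaton `P_k`: `P` without `k`-infeasibility. -/
def Pk {Qp : Type} (T : Thy V F) (O : Ops V F T) (P : Buchi (Stmt I C F) Qp) (k : ℕ) :
    Buchi (Stmt I C F) (Qp × List (Stmt I C F × Qp)) where
  q0 := (P.q0, [])
  δ := fun st s st' => ValidSt P k st ∧ ValidSt P k st' ∧
        ∃ q', P.δ (lastQ st) s q' ∧ WinFeasible T O (stmts st ++ [s]) ∧ st' = push k st s q'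
  Acc := {st | lastQ st ∈ P.Acc}

/-! ### Infeasible accepting cycles and their removal -/

/-- The trace `(s₁ … s_n)^ω` of a cycle. -/
def cycTrace (T : Thy V F) (O : Ops V F T) {Qp : Type}
    (ϱ : List (Qp × Stmt I C F × Qp)) : ℕ → Stmt I C F :=
  fun t => ((ϱ[t % ϱ.length]?).map fun e => e.2.1).getD (trueStmt T O)

/-- `ϱ` is a cycle of transitions of `B`. -/
def IsCycle {S Qp : Type} (B : Buchi S Qp) (ϱ : List (Qp × S × Qp)) : Prop :=
  ϱ ≠ [] ∧ (∀ e ∈ ϱ, B.δ e.1 e.2.1 e.2.2) ∧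
  (∀ i, (h : i + 1 < ϱ.length) →
    (ϱ.get ⟨i + 1, h⟩).1 = (ϱ.get ⟨i, Nat.lt_of_succ_lt h⟩).2.2) ∧
  ∀ h : ϱ ≠ [], (ϱ.getLast h).2.2 = (ϱ.head h).1

/-- An infeasible accepting cycle. -/
def InfAccCycle {Qp : Type} (T : Thy V F) (O : Ops V F T)
    (B : Buchi (Stmt I C F) Qp) (ϱ : List (Qp × Stmt I C F × Qp)) : Prop :=
  IsCycle B ϱ ∧ (∃ e ∈ ϱ, e.1 ∈ B.Acc) ∧
  ∀ init : Assign V I C, ¬ Feasible T init (cycTrace T O ϱ)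

/-- A trace ends with the infinite repetition of the statements of the cycle `ϱ`. -/
def EndsWithCyc {Qp : Type} (T : Thy V F) (O : Ops V F T)
    (σ : ℕ → Stmt I C F) (ϱ : List (Qp × Stmt I C F × Qp)) : Prop :=
  ∃ N, ∀ j, σ (N + j) = cycTrace T O ϱ j

/-- The automaton `A_ϱ`, accepting exactly the traces ending with `ϱ^ω`. -/
def cycAut {Qp : Type} (ϱ : List (Qp × Stmt I C F × Qp)) :
    Buchi (Stmt I C F) (Option (Fin ϱ.length)) where
  q0 := none
  δ := fun st s st' =>
    match st with
    | none => st' = none ∨ ∃ h : ϱ ≠ [],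
        s = (ϱ.head h).2.1 ∧
        st' = some ⟨1 % ϱ.length, Nat.mod_lt _ (List.length_pos_iff.mpr h)⟩
    | some i => s = (ϱ.get i).2.1 ∧
        st' = some ⟨((i : ℕ) + 1) % ϱ.length,
          Nat.mod_lt _ (Nat.lt_of_le_of_lt (Nat.zero_le _) i.isLt)⟩
  Acc := {st | st ≠ none}

/-- A Büchi automaton bundled with its state type. -/
structure BAut (A : Type) : Type 1 where
  Q : Type
  B : Buchi A Q

/-- One removal step: remove (the languages of the automata `A_ϱ` for) a set of
infeasible accepting cycles from an automaton. -/
def RemStep (T : Thy V F) (O : Ops V F T) (x y : BAut (Stmt I C F)) : Prop :=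
  ∃ Cset : Set (List (x.Q × Stmt I C F × x.Q)),
    (∀ ϱ ∈ Cset, InfAccCycle T O x.B ϱ) ∧
    ∀ σ, y.B.Accepts σ ↔ (x.B.Accepts σ ∧ ∀ ϱ ∈ Cset, ¬ EndsWithCyc T O σ ϱ)

/-- `k'` iterations of removing infeasible accepting cycles. -/
def RemChain (T : Thy V F) (O : Ops V F T) :
    ℕ → BAut (Stmt I C F) → BAut (Stmt I C F) → Prop
  | 0, x, y => y = x
  | k' + 1, x, y => ∃ z, RemChain T O k' x z ∧ RemStep T O z y

/-- The universal projection of (a refinement of) the combined product: keep the first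
`m` of the `n` statements of each `combine`-labelled transition. -/
noncomputable def projU {Q' : Type} (T : Thy V F) (O : Ops V F T) {m n : ℕ}
    (_hm : 0 < m) (hmn : m ≤ n)
    (ρ : List (FTerm (I × Fin n) (C × Fin n) F))
    (υ : List ((C × Fin n) × FTerm (I × Fin n) (C × Fin n) F))
    (inps : List (I × Fin n))
    (B : Buchi (Stmt Empty (CStar (I × Fin n) (C × Fin n)) F) Q') :
    Buchi (Stmt (I × Fin n) (C × Fin n) F) Q' where
  q0 := B.q0
  δ := fun q w q' => ∃ (ss : Fin n → Stmt0 (I × Fin n) (C × Fin n) F)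
        (l : Set (AP (I × Fin n) (C × Fin n) F)),
        B.δ q (combine T O ρ υ inps ((List.finRange n).map ss) l) q' ∧
        w.1 = (List.finRange m).map fun j => ss (Fin.castLE hmn j)
  Acc := B.Acc

/-- The formula `∀π₁ … ∀π_m ∃π_{m+1} … ∃π_n. ψ`. -/
def AEform (m n : ℕ) (ψ : TSL (I × Fin n) (C × Fin n) F) : HyperTSL I C F (Fin n) :=
  (List.finRange n).foldr
    (fun (j : Fin n) acc => if (j : ℕ) < m then HyperTSL.all j acc else HyperTSL.ex j acc)
    (.qf ψ)

end TSLMC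
/-! ### Reduced and adapted computations -/

namespace TSLMC
open scoped Classical
variable {V I C F Pi : Type}

/-- The index `ι(t) = B·(t+1) − 3` for blocks of length `B`. -/
def iotaIdx (B t : ℕ) : ℕ := B * (t + 1) - 3

/-- The reduced computation: the combined computation at the indices `ι(t)`,
restricted to the original inputs and cells. -/
def reduceC (B : ℕ) (ζ : ℕ → Assign V Empty (CStar I C)) : ℕ → Assign V I C :=
  fun t x => ζ (iotaIdx B t) (.inr (.inl x.swap))

/-- The reduced computation of trace variable `j`: the combined hyper-computation at
the indices `ι(t)`, restricted to the `j`-indexed inputs and cells, renamed back. -/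
def reduceTr {n : ℕ} (B : ℕ) (j : Fin n)
    (ζ : ℕ → Assign V Empty (CStar (I × Fin n) (C × Fin n))) : ℕ → Assign V I C :=
  fun t x => ζ (iotaIdx B t)
    (.inr (.inl (match x with | .inl i => .inr (i, j) | .inr c => .inl (c, j))))

/-- Assembling a hyper-computation from one computation per trace variable
(`∅[π₁, ζ₁]…[π_n, ζ_n]`). -/
def assembleH {n : ℕ} (red : Fin n → ℕ → Assign V I C) :
    ℕ → Assign V (I × Fin n) (C × Fin n) :=
  fun t x => match x with
  | .inl (i, j) => red j t (.inl i)
  | .inr (c, j) => red j t (.inr c)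

/-- The adapted computation `ζ̃` of a computation `ζ`. -/
noncomputable def adapt (T : Thy V F) (upds : List (C × FTerm I C F)) (inps : List I)
    (init : Assign V I C) (initC : Assign V Empty (CStar I C))
    (ζ : ℕ → Assign V I C) : ℕ → Assign V Empty (CStar I C) := fun idx x =>
  let m := upds.length
  let k := inps.length
  let b := idx / (m + k + 3)
  let i := idx % (m + k + 3)
  let newTmp : ℕ → V := fun p =>
    ((upds[p]?).map fun u => u.2.eval T (prevA init ζ b)).getD (initC (.inr (.inr p)))
  let oldTmp : ℕ → V := fun p =>
    match b with
    | 0 => initC (.inr (.inr p))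
    | b' + 1 => ((upds[p]?).map fun u => u.2.eval T (prevA init ζ b')).getD
        (initC (.inr (.inr p)))
  match x with
  | .inl e => e.elim
  | .inr (.inr p) => if i < m then (if p ≤ i then newTmp p else oldTmp p) else newTmp p
  | .inr (.inl (.inl c)) => if i < m then prevA init ζ b (.inr c) else ζ b (.inr c)
  | .inr (.inl (.inr ii)) =>
      if i < m + 1 then prevA init ζ b (.inl ii)
      else if i ≤ m + k then
        (if inps.idxOf ii < i - m then ζ b (.inl ii) else prevA init ζ b (.inl ii))
      else ζ b (.inl ii)

/-- The adapted hyper-computation of computations `ζ_{π₁}, …, ζ_{π_n}`. -/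
noncomputable def hadapt {n : ℕ} (T : Thy V F)
    (upds : List ((C × Fin n) × FTerm (I × Fin n) (C × Fin n) F))
    (inps : List (I × Fin n)) (init : Assign V I C)
    (initC : Assign V Empty (CStar (I × Fin n) (C × Fin n)))
    (ζs : Fin n → ℕ → Assign V I C) :
    ℕ → Assign V Empty (CStar (I × Fin n) (C × Fin n)) := fun idx x =>
  let m := upds.length
  let k := inps.length
  let b := idx / (m + n + k + 2)
  let i := idx % (m + n + k + 2)
  let ζ' : ℕ → Assign V (I × Fin n) (C × Fin n) := assembleH ζs
  let hinit : Assign V (I × Fin n) (C × Fin n) := liftInit init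
  let newTmp : ℕ → V := fun p =>
    ((upds[p]?).map fun u => u.2.eval T (prevA hinit ζ' b)).getD (initC (.inr (.inr p)))
  let oldTmp : ℕ → V := fun p =>
    match b with
    | 0 => initC (.inr (.inr p))
    | b' + 1 => ((upds[p]?).map fun u => u.2.eval T (prevA hinit ζ' b')).getD
        (initC (.inr (.inr p)))
  match x with
  | .inl e => e.elim
  | .inr (.inr p) => if i < m then (if p ≤ i then newTmp p else oldTmp p) else newTmp p
  | .inr (.inl (.inl cj)) =>
      if i < m then prevA hinit ζ' b (.inr cj)
      else if i < m + n then
        (if (cj.2 : ℕ) < i - m + 1 then ζs cj.2 b (.inr cj.1)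
         else prevA hinit ζ' b (.inr cj))
      else ζ' b (.inr cj)
  | .inr (.inl (.inr ij)) =>
      if i < m + n then prevA hinit ζ' b (.inl ij)
      else if i < m + n + k then
        (if inps.idxOf ij < i - (m + n) + 1 then ζ' b (.inl ij)
         else prevA hinit ζ' b (.inl ij))
      else ζ' b (.inl ij)

/-- The composed trace `σ_t = ((σ_{π₁})_{π₁})_t; … ; ((σ_{π_n})_{π_n})_t`. -/
def composedTrace {n : ℕ} (σs : Fin n → ℕ → Stmt0 I C F) (t : ℕ) :
    List (Stmt0 (I × Fin n) (C × Fin n) F) :=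
  (List.finRange n).map fun j => (σs j t).rename j

/-- The composed trace, as a trace of (nonempty) program statements. -/
def composedStmt {n : ℕ} (hn : 0 < n) (σs : Fin n → ℕ → Stmt0 I C F) (t : ℕ) :
    Stmt (I × Fin n) (C × Fin n) F :=
  ⟨composedTrace σs t, by
    intro h
    have := congrArg List.length h
    simp [composedTrace] at this
    omega⟩

end TSLMC

namespace TSLMC
open scoped Classical
section Helpers
variable {V I C F : Type}

theorem eval_app (T : Thy V F) {I' C' : Type} (a : Assign V I' C') (f : F)
    (ts : List (FTerm I' C' F)) :
    (FTerm.app f ts).eval T a = T.ε f (ts.map (FTerm.eval T a)) := by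
  rw [FTerm.eval]
  congr 1
  simp

/-- restriction of an extended assignment to original inputs and cells -/
def restrictA (a : Assign V Empty (CStar I C)) : Assign V I C :=
  fun x => a (.inr (.inl x.swap))

theorem embed_eval (T : Thy V F) (a : Assign V Empty (CStar I C)) :
    ∀ τ : FTerm I C F, FTerm.eval T a τ.embed = FTerm.eval T (restrictA a) τ
  | .inp i => by simp [FTerm.embed, FTerm.eval, restrictA, Sum.swap]
  | .cell c => by simp [FTerm.embed, FTerm.eval, restrictA, Sum.swap]
  | .app f ts => by
    rw [FTerm.embed, eval_app, eval_app, List.map_map]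
    congr 1
    rw [← List.attach_map_val (l := ts) (f := FTerm.eval T (restrictA a))]
    apply List.map_congr_left
    rintro ⟨τ, hτ⟩ -
    exact embed_eval T a τ
decreasing_by
  have := List.sizeOf_lt_of_mem hτ
  simp only [FTerm.app.sizeOf_spec]
  omega

theorem conj_eval (T : Thy V F) (O : Ops V F T) (a : Assign V Empty (CStar I C)) :
    ∀ ts : List (FTerm Empty (CStar I C) F),
      ((conjTerm T O ts).eval T a = T.vtrue ↔ ∀ τ ∈ ts, τ.eval T a = T.vtrue)
  | [] => by simp [conjTerm, eval_app, O.htrue]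
  | τ :: ts => by
    rw [conjTerm, eval_app]
    simp only [List.map_cons, List.map_nil]
    rw [O.hand]
    constructor
    · intro hv
      by_cases hc : τ.eval T a = T.vtrue ∧ (conjTerm T O ts).eval T a = T.vtrue
      · intro τ' hτ'
        rcases List.mem_cons.1 hτ' with h | h
        · rw [h]; exact hc.1
        · exact ((conj_eval T O a ts).1 hc.2) τ' h
      · rw [if_neg hc] at hv
        exact absurd hv.symm O.tne
    · intro hall
      have h1 : τ.eval T a = T.vtrue := hall τ (by simp)
      have h2 : (conjTerm T O ts).eval T a = T.vtrue :=
        (conj_eval T O a ts).2 fun τ' hτ' => hall τ' (by simp [hτ'])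
      rw [if_pos ⟨h1, h2⟩]

theorem neg_eval (T : Thy V F) (O : Ops V F T) {I' C' : Type} (a : Assign V I' C')
    (τ : FTerm I' C' F) :
    (FTerm.app O.fneg [τ]).eval T a = T.vtrue ↔ ¬ τ.eval T a = T.vtrue := by
  rw [eval_app]
  simp only [List.map_cons, List.map_nil]
  rw [O.hneg]
  split_ifs with hc
  · exact ⟨fun hh => (O.tne hh.symm).elim, fun hn => (hn hc).elim⟩
  · simp [hc]

theorem eq_eval (T : Thy V F) (O : Ops V F T) (a : Assign V Empty (CStar I C))
    (x y : CStar I C) :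
    (FTerm.app O.feq [FTerm.cell x, FTerm.cell y]).eval T a = T.vtrue ↔
      a (.inr x) = a (.inr y) := by
  rw [eval_app]
  simp only [List.map_cons, List.map_nil]
  have hx : (FTerm.cell x : FTerm Empty (CStar I C) F).eval T a = a (.inr x) := by
    rw [FTerm.eval]
  have hy : (FTerm.cell y : FTerm Empty (CStar I C) F).eval T a = a (.inr y) := by
    rw [FTerm.eval]
  rw [hx, hy, O.heq]
  split_ifs with hc
  · simp [hc]
  · exact ⟨fun hh => (O.tne hh.symm).elim, fun he => (hc he).elim⟩

theorem fpos_const {B : ℕ} (hB : 0 < B) (σ : ℕ → Stmt I C F)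
    (hl : ∀ t, ((σ t).1).length = B) : ∀ j, fpos σ j = (j / B, j % B) := by
  intro j
  induction j with
  | zero => simp [fpos]
  | succ j ih =>
    simp only [fpos]
    rw [ih, hl]
    obtain ⟨q, r, hr, hj⟩ : ∃ q r, r < B ∧ j = B * q + r :=
      ⟨j / B, j % B, Nat.mod_lt _ hB, (Nat.div_add_mod j B).symm⟩
    have hq : j / B = q := by
      rw [hj, Nat.mul_add_div hB, Nat.div_eq_of_lt hr, Nat.add_zero]
    have hr' : j % B = r := by rw [hj, Nat.mul_add_mod, Nat.mod_eq_of_lt hr]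
    have hj1 : j + 1 = B * q + (r + 1) := by rw [hj, Nat.add_assoc]
    by_cases hc : r + 1 < B
    · have h1 : (j + 1) / B = q := by
        rw [hj1, Nat.mul_add_div hB, Nat.div_eq_of_lt hc, Nat.add_zero]
      have h2 : (j + 1) % B = r + 1 := by
        rw [hj1, Nat.mul_add_mod, Nat.mod_eq_of_lt hc]
      simp only [hq, hr', h1, h2]
      rw [if_pos hc]
    · have hb : r + 1 = B := by omega
      have h1 : (j + 1) / B = q + 1 := by
        rw [hj1, hb, ← Nat.mul_succ, Nat.mul_div_cancel_left _ hB]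
      have h2 : (j + 1) % B = 0 := by
        rw [hj1, hb, ← Nat.mul_succ, Nat.mul_mod_right]
      simp only [hq, hr', h1, h2]
      rw [if_neg hc]

theorem flatten_const {B : ℕ} (hB : 0 < B) (σ : ℕ → Stmt I C F)
    (hl : ∀ t, ((σ t).1).length = B) (j : ℕ) :
    flatten σ j = ((σ (j / B)).1)[j % B]'(by rw [hl]; exact Nat.mod_lt _ hB) := by
  have hp := fpos_const hB σ hl j
  have hlt : (fpos σ j).2 < ((σ (fpos σ j).1).1).length := by
    rw [hp, hl]
    exact Nat.mod_lt _ hB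
  rw [flatten, List.getD_eq_getElem _ _ hlt]
  simp only [hp]

end Helpers
end TSLMC

namespace TSLMC
open scoped Classical
section CombineLemmas
variable {V I C F : Type} (T : Thy V F) (O : Ops V F T)
  (ρ : List (FTerm I C F)) (υ : List (C × FTerm I C F)) (inps : List I)
  (s : Stmt0 I C F) (l : Set (AP I C F))

theorem combine_length :
    ((combine T O ρ υ inps [s] l).1).length = inps.length + υ.length + 3 := by
  simp [combine]
  omega

theorem combine_get_tmp (j : ℕ) (hj : j < υ.length) :
    ((combine T O ρ υ inps [s] l).1)[j]'(by rw [combine_length]; omega) =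
      Stmt0.assign (Sum.inr j) ((υ[j]).2.embed) := by
  simp only [combine]
  rw [List.getElem_append_left (by simp; omega),
      List.getElem_append_left (by simp; omega),
      List.getElem_append_left (by simp; omega),
      List.getElem_mapIdx]

theorem combine_get_stmt :
    ((combine T O ρ υ inps [s] l).1)[υ.length]'(by rw [combine_length]; omega) =
      s.embed := by
  simp only [combine]
  rw [List.getElem_append_left (by simp),
      List.getElem_append_left (by simp),
      List.getElem_append_right (by simp)]
  simp

theorem combine_get_havoc (p : ℕ) (hp : p < inps.length) :
    ((combine T O ρ υ inps [s] l).1)[υ.length + 1 + p]'(by rw [combine_length]; omega) =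
      Stmt0.havoc (Sum.inl (Sum.inr (inps[p]))) := by
  simp only [combine]
  rw [List.getElem_append_left (by simp; omega),
      List.getElem_append_right (by simp)]
  simp [hp]

theorem combine_get_assertP :
    ((combine T O ρ υ inps [s] l).1)[υ.length + inps.length + 1]'(by rw [combine_length]; omega) =
      Stmt0.assert (conjTerm T O
        (ρ.map fun τ => if Sum.inl τ ∈ l then τ.embed else .app O.fneg [τ.embed])) := by
  simp only [combine]
  rw [List.getElem_append_right (by simp; omega)]
  simp

theorem combine_get_assertU :
    ((combine T O ρ υ inps [s] l).1)[υ.length + inps.length + 2]'(by rw [combine_length]; omega) =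
      Stmt0.assert (conjTerm T O
        (υ.mapIdx fun j u =>
          if Sum.inr u ∈ l then
            (FTerm.app O.feq [.cell (Sum.inl (Sum.inl u.1)), .cell (Sum.inr j)])
          else .app O.fneg [FTerm.app O.feq [.cell (Sum.inl (Sum.inl u.1)), .cell (Sum.inr j)]])) := by
  simp only [combine]
  rw [List.getElem_append_right (by simp; omega)]
  simp
  have hidx : υ.length + inps.length + 2 - (υ.length + (inps.length + 1)) = 1 := by omega
  simp [hidx]

end CombineLemmas
end TSLMC

namespace TSLMC
open scoped Classical
theorem reduced_seq
    {V I C F : Type} (T : Thy V F) (O : Ops V F T)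
    (init : Assign V I C) (initC : Assign V Empty (CStar I C))
    (hic : ∀ c : C, initC (.inr (.inl (.inl c))) = init (.inr c))
    (hii : ∀ i : I, initC (.inr (.inl (.inr i))) = init (.inl i))
    (ρ : List (FTerm I C F)) (hρ : ∀ τ ∈ ρ, IsPredTerm T τ)
    (υ : List (C × FTerm I C F))
    (inps : List I) (hinps : ∀ i : I, i ∈ inps) (hnd : inps.Nodup)
    (σ : ℕ → Stmt0 I C F) (X : ℕ → Set (AP I C F))
    (hX : ∀ t, X t ⊆ {a | Sum.elim (· ∈ ρ) (· ∈ υ) a})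
    (ζ : ℕ → Assign V Empty (CStar I C))
    (h : MatchesC T initC ζ (fun t => combine T O ρ υ inps [σ t] (X t))) :
    ∀ t, X t = SeqW T init (reduceC (inps.length + υ.length + 3) ζ)
      {τ | τ ∈ ρ} {u | u ∈ υ} t := by
  classical
  set B : ℕ := inps.length + υ.length + 3 with hB
  have hB0 : 0 < B := by omega
  have hmk : υ.length + inps.length + 3 = B := by omega
  set red : ℕ → Assign V I C := reduceC B ζ with hredd
  have hlen : ∀ t, (((fun t => combine T O ρ υ inps [σ t] (X t)) t).1).length = B := by
    intro t
    rw [combine_length]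
  have hflat := flatten_const hB0 _ hlen
  have hM : ∀ j, matchesAt T initC ζ
      (flatten (fun t => combine T O ρ υ inps [σ t] (X t))) j := h
  have hdiv : ∀ t i, i < B → (B * t + i) / B = t := by
    intro t i hi
    rw [Nat.mul_add_div hB0, Nat.div_eq_of_lt hi, Nat.add_zero]
  have hmod : ∀ t i, i < B → (B * t + i) % B = i := by
    intro t i hi
    rw [Nat.mul_add_mod]
    exact Nat.mod_eq_of_lt hi
  have hstmt : ∀ t i (hi : i < B),
      flatten (fun t => combine T O ρ υ inps [σ t] (X t)) (B * t + i) =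
        ((combine T O ρ υ inps [σ t] (X t)).1)[i]'(by rw [combine_length]; omega) := by
    intro t i hi
    have := hflat (B * t + i)
    simp only [hdiv t i hi, hmod t i hi] at this
    exact this
  -- facts about the assignment steps
  have hAsgn : ∀ t j (hj : j < υ.length),
      (ζ (B * t + j) (.inr (.inr j)) =
        FTerm.eval T (prevA initC ζ (B * t + j)) ((υ[j]).2.embed)) ∧
      (∀ x : CStar I C, x ≠ .inr j →
        ζ (B * t + j) (.inr x) = prevA initC ζ (B * t + j) (.inr x)) := by
    intro t j hj
    have hm := hM (B * t + j)
    simp only [matchesAt] at hm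
    rw [hstmt t j (by omega), combine_get_tmp T O ρ υ inps (σ t) (X t) j hj] at hm
    exact hm
  -- facts about the embedded statement step
  have hMid : ∀ t (x : CStar I C), (∀ c : C, x ≠ .inl (.inl c)) →
      ζ (B * t + υ.length) (.inr x) = prevA initC ζ (B * t + υ.length) (.inr x) := by
    intro t x hx
    have hm := hM (B * t + υ.length)
    simp only [matchesAt] at hm
    rw [hstmt t υ.length (by omega), combine_get_stmt T O ρ υ inps (σ t) (X t)] at hm
    cases hσt : σ t with
    | assert τ =>
      rw [hσt] at hm
      simp only [Stmt0.embed] at hm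
      exact hm.2 x
    | assign c τ =>
      rw [hσt] at hm
      simp only [Stmt0.embed] at hm
      exact hm.2 x (hx c)
    | havoc c =>
      rw [hσt] at hm
      simp only [Stmt0.embed] at hm
      exact hm x (hx c)
  -- facts about the havoc steps
  have hHav : ∀ t p (hp : p < inps.length), ∀ x : CStar I C,
      (∀ i' : I, x ≠ .inl (.inr i')) →
      ζ (B * t + (υ.length + 1 + p)) (.inr x) =
        prevA initC ζ (B * t + (υ.length + 1 + p)) (.inr x) := by
    intro t p hp x hx
    have hm := hM (B * t + (υ.length + 1 + p))
    simp only [matchesAt] at hm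
    rw [hstmt t (υ.length + 1 + p) (by omega),
        combine_get_havoc T O ρ υ inps (σ t) (X t) p hp] at hm
    exact hm x (hx _)
  -- the assertion facts
  have hA1 : ∀ t,
      FTerm.eval T (prevA initC ζ (B * t + (υ.length + inps.length + 1)))
        (conjTerm T O (ρ.map fun τ =>
          if Sum.inl τ ∈ X t then τ.embed else .app O.fneg [τ.embed])) = T.vtrue ∧
      ∀ c, ζ (B * t + (υ.length + inps.length + 1)) (.inr c) =
        prevA initC ζ (B * t + (υ.length + inps.length + 1)) (.inr c) := by
    intro t
    have hm := hM (B * t + (υ.length + inps.length + 1))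
    simp only [matchesAt] at hm
    rw [hstmt t (υ.length + inps.length + 1) (by omega),
        combine_get_assertP T O ρ υ inps (σ t) (X t)] at hm
    exact hm
  have hA2 : ∀ t,
      FTerm.eval T (prevA initC ζ (B * t + (υ.length + inps.length + 2)))
        (conjTerm T O (υ.mapIdx fun j u =>
          if Sum.inr u ∈ X t then
            (FTerm.app O.feq [.cell (Sum.inl (Sum.inl u.1)), .cell (Sum.inr j)])
          else .app O.fneg
            [FTerm.app O.feq [.cell (Sum.inl (Sum.inl u.1)), .cell (Sum.inr j)]])) =
        T.vtrue ∧
      ∀ c, ζ (B * t + (υ.length + inps.length + 2)) (.inr c) =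
        prevA initC ζ (B * t + (υ.length + inps.length + 2)) (.inr c) := by
    intro t
    have hm := hM (B * t + (υ.length + inps.length + 2))
    simp only [matchesAt] at hm
    rw [hstmt t (υ.length + inps.length + 2) (by omega),
        combine_get_assertU T O ρ υ inps (σ t) (X t)] at hm
    exact hm
  -- prevA index reductions
  have hprevS : ∀ n, prevA initC ζ (n + 1) = ζ n := fun n => rfl
  -- chain through the assignment steps
  have hchain : ∀ t i, ∀ _hi : i ≤ υ.length,
      (∀ x : C ⊕ I, prevA initC ζ (B * t + i) (.inr (.inl x)) =
        prevA initC ζ (B * t) (.inr (.inl x))) ∧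
      (∀ j (hj : j < i), prevA initC ζ (B * t + i) (.inr (.inr j)) =
        FTerm.eval T (restrictA (prevA initC ζ (B * t)))
          ((υ[j]'(by omega)).2)) := by
    intro t i
    induction i with
    | zero => exact fun _ => ⟨fun x => rfl, fun j hj => absurd hj (Nat.not_lt_zero j)⟩
    | succ i ih =>
      intro hi
      have hii : i ≤ υ.length := by omega
      have hiu : i < υ.length := by omega
      obtain ⟨ih1, ih2⟩ := ih hii
      have hidx : B * t + (i + 1) = (B * t + i) + 1 := by ring
      have hA := hAsgn t i hiu
      constructor
      · intro x
        rw [hidx, hprevS]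
        rw [hA.2 (.inl x) (by simp)]
        exact ih1 x
      · intro j hj
        rw [hidx, hprevS]
        rcases Nat.lt_or_ge j i with hji | hji
        · rw [hA.2 (.inr j) (by simp; omega)]
          exact ih2 j hji
        · have hj' : j = i := by omega
          subst hj'
          rw [hA.1, embed_eval]
          congr 1
          funext x
          exact ih1 x.swap
  -- tmp cells preserved through havocs
  have hHavChain : ∀ t (x : CStar I C), (∀ i' : I, x ≠ .inl (.inr i')) →
      ∀ p, p ≤ inps.length →
      ζ (B * t + (υ.length + p)) (.inr x) = ζ (B * t + υ.length) (.inr x) := by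
    intro t x hx p
    induction p with
    | zero => exact fun _ => rfl
    | succ p ih =>
      intro hp
      have hp' : p < inps.length := by omega
      have hidx : B * t + (υ.length + (p + 1)) = B * t + (υ.length + 1 + p) := by ring
      have hidx2 : B * t + (υ.length + 1 + p) = (B * t + (υ.length + p)) + 1 := by ring
      rw [hidx, hHav t p hp' x hx, hidx2, hprevS]
      exact ih (by omega)
  -- tmp-cell values at the reduction points
  have hTmpEnd : ∀ t j (hj : j < υ.length),
      ζ (B * t + (υ.length + inps.length)) (.inr (.inr j)) =
        FTerm.eval T (restrictA (prevA initC ζ (B * t))) ((υ[j]).2) := by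
    intro t j hj
    rw [hHavChain t (.inr j) (by simp) inps.length le_rfl]
    rw [hMid t (.inr j) (by simp)]
    exact (hchain t υ.length le_rfl).2 j hj
  -- iota index
  have hNι : ∀ t, iotaIdx B t = B * t + (υ.length + inps.length) := by
    intro t
    have h1 : B * (t + 1) = B * t + (υ.length + inps.length) + 3 := by
      rw [Nat.mul_succ, hB]; ring
    rw [iotaIdx, h1]
    omega
  -- prev-index reductions for asserts
  have hprev1 : ∀ t, prevA initC ζ (B * t + (υ.length + inps.length + 1)) =
      ζ (B * t + (υ.length + inps.length)) := by
    intro t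
    rw [show B * t + (υ.length + inps.length + 1) =
      (B * t + (υ.length + inps.length)) + 1 from by ring, hprevS]
  have hζeq1 : ∀ t, ζ (B * t + (υ.length + inps.length + 1)) =
      ζ (B * t + (υ.length + inps.length)) := by
    intro t
    funext x
    cases x with
    | inl e => exact e.elim
    | inr c => rw [(hA1 t).2 c, hprev1]
  have hprev2 : ∀ t, prevA initC ζ (B * t + (υ.length + inps.length + 2)) =
      ζ (B * t + (υ.length + inps.length)) := by
    intro t
    rw [show B * t + (υ.length + inps.length + 2) =
      (B * t + (υ.length + inps.length + 1)) + 1 from by ring, hprevS, hζeq1]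
  have hζeq2 : ∀ t, ζ (B * t + (υ.length + inps.length + 2)) =
      ζ (B * t + (υ.length + inps.length)) := by
    intro t
    funext x
    cases x with
    | inl e => exact e.elim
    | inr c => rw [(hA2 t).2 c, hprev2]
  -- the reduced computation at time t
  have hRed : ∀ t, restrictA (ζ (B * t + (υ.length + inps.length))) = red t := by
    intro t
    funext x
    simp only [hredd, reduceC, restrictA, hNι t]
  -- relating starting states to the reduced trace
  have hG : ∀ t, restrictA (prevA initC ζ (B * t)) = prevA init red t := by
    intro t
    induction t with
    | zero =>
      funext x
      have h0 : B * 0 = 0 := by ring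
      rw [h0]
      cases x with
      | inl i => exact hii i
      | inr c => exact hic c
    | succ t ih =>
      have h1 : B * (t + 1) = (B * t + (υ.length + inps.length + 2)) + 1 := by
        rw [Nat.mul_succ, hB]; ring
      rw [h1, hprevS, hζeq2, hRed]
      rfl
  -- main argument
  intro t
  have hTmp : ∀ j (hj : j < υ.length),
      ζ (B * t + (υ.length + inps.length)) (.inr (.inr j)) =
        FTerm.eval T (prevA init red t) ((υ[j]).2) := by
    intro j hj
    rw [hTmpEnd t j hj, hG t]
  -- predicate assertion content
  have hP := (hA1 t).1
  rw [hprev1 t] at hP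
  rw [conj_eval] at hP
  -- update assertion content
  have hU := (hA2 t).1
  rw [hprev2 t] at hU
  rw [conj_eval] at hU
  ext a
  simp only [SeqW, Set.mem_setOf_eq]
  cases a with
  | inl τ =>
    simp only [Sum.elim_inl, TSL.sat, Set.mem_setOf_eq]
    constructor
    · intro haX
      have hτρ : τ ∈ ρ := by simpa using hX t haX
      refine ⟨hτρ, ?_⟩
      have hmem : (if Sum.inl τ ∈ X t then τ.embed else .app O.fneg [τ.embed]) ∈
          ρ.map (fun τ => if Sum.inl τ ∈ X t then τ.embed else .app O.fneg [τ.embed]) :=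
        List.mem_map_of_mem hτρ
      have := hP _ hmem
      rw [if_pos haX, embed_eval, hRed t] at this
      exact this
    · rintro ⟨hτρ, hsat⟩
      by_contra haX
      have hmem : (if Sum.inl τ ∈ X t then τ.embed else .app O.fneg [τ.embed]) ∈
          ρ.map (fun τ => if Sum.inl τ ∈ X t then τ.embed else .app O.fneg [τ.embed]) :=
        List.mem_map_of_mem hτρ
      have := hP _ hmem
      rw [if_neg haX, neg_eval, embed_eval, hRed t] at this
      exact this hsat
  | inr u =>
    simp only [Sum.elim_inr, TSL.sat, Set.mem_setOf_eq]
    constructor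
    · intro haX
      have huυ : u ∈ υ := by simpa using hX t haX
      refine ⟨huυ, ?_⟩
      obtain ⟨j, hj, hju⟩ := List.mem_iff_getElem.1 huυ
      have hmem : (if Sum.inr (υ[j]) ∈ X t then
            (FTerm.app O.feq [.cell (Sum.inl (Sum.inl (υ[j]).1)), .cell (Sum.inr j)] :
              FTerm Empty (CStar I C) F)
          else .app O.fneg
            [FTerm.app O.feq [.cell (Sum.inl (Sum.inl (υ[j]).1)), .cell (Sum.inr j)]]) ∈
          (υ.mapIdx fun j u =>
            if Sum.inr u ∈ X t then
              (FTerm.app O.feq [.cell (Sum.inl (Sum.inl u.1)), .cell (Sum.inr j)] :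
                FTerm Empty (CStar I C) F)
            else .app O.fneg
              [FTerm.app O.feq [.cell (Sum.inl (Sum.inl u.1)), .cell (Sum.inr j)]]) := by
        refine List.mem_iff_getElem.2 ⟨j, by rw [List.length_mapIdx]; exact hj, ?_⟩
        rw [List.getElem_mapIdx]
      have hv := hU _ hmem
      rw [hju, if_pos haX, eq_eval] at hv
      have ht := hTmp j hj
      rw [hju] at ht
      have hredc : red t (.inr u.1) =
          ζ (B * t + (υ.length + inps.length)) (.inr (.inl (.inl u.1))) := by
        rw [← hRed t]; rfl
      rw [hredc, hv, ht]
    · rintro ⟨huυ, hsat⟩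
      by_contra haX
      obtain ⟨j, hj, hju⟩ := List.mem_iff_getElem.1 huυ
      have hmem : (if Sum.inr (υ[j]) ∈ X t then
            (FTerm.app O.feq [.cell (Sum.inl (Sum.inl (υ[j]).1)), .cell (Sum.inr j)] :
              FTerm Empty (CStar I C) F)
          else .app O.fneg
            [FTerm.app O.feq [.cell (Sum.inl (Sum.inl (υ[j]).1)), .cell (Sum.inr j)]]) ∈
          (υ.mapIdx fun j u =>
            if Sum.inr u ∈ X t then
              (FTerm.app O.feq [.cell (Sum.inl (Sum.inl u.1)), .cell (Sum.inr j)] :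
                FTerm Empty (CStar I C) F)
            else .app O.fneg
              [FTerm.app O.feq [.cell (Sum.inl (Sum.inl u.1)), .cell (Sum.inr j)]]) := by
        refine List.mem_iff_getElem.2 ⟨j, by rw [List.length_mapIdx]; exact hj, ?_⟩
        rw [List.getElem_mapIdx]
      have hv := hU _ hmem
      rw [hju, if_neg haX, neg_eval, eq_eval] at hv
      have ht := hTmp j hj
      rw [hju] at ht
      have hredc : red t (.inr u.1) =
          ζ (B * t + (υ.length + inps.length)) (.inr (.inl (.inl u.1))) := by
        rw [← hRed t]; rfl
      rw [hredc] at hsat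
      exact hv (hsat.symm.trans ht.symm)


end TSLMC
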